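/- arXiv:2101.12245 — 3 statements merged into one kernel-verified Lean document; each statement's English description precedes it below -/
import Mathlib

section
/- Let ⟨f_α : α < η⟩ be a <*-increasing sequence in ∏_n τ_n which is <*-cofinal in ∏_n δ_n, where δ_n = sup(N ∩ τ_n) for an internally approachable structure N, and suppose f_δ (for δ = sup(N ∩ η)) is an exact upper bound of ⟨f_α : α < δ⟩ with the sequence ⟨f_α : α < δ⟩ cofinally interleaved with ∏_n δ_n. Then f_δ(n) = δ_n for all but finitely many n. -/
/-!
If `f_δ(n) < δ_n` infinitely often, patch an element of `∏ₙ δₙ` with `f_δ` at those `n`: the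
result lies in `∏ₙ δₙ`, hence is `<*` some `f_α <* f_δ`, which is absurd. If `δ_n < f_δ(n)`
infinitely often, patch a function `<* f_δ` with `δ_n` at those `n`: the result is `<* f_δ`, hence
`<*` some `f_α`, hence `<*` an element of `∏ₙ δₙ`, again absurd.
-/

/-- `f <* g` : eventual (mod finite) domination. -/
def evDom (f g : ℕ → Ordinal) : Prop := ∀ᶠ n in Filter.atTop, f n < g n

section Patching

variable {ι α : Type*} [LinearOrder α] {l : Filter ι}

theorem eventually_le_of_forall_lt_imp_eventually_lt {d u g₀ : ι → α} (hg₀ : ∀ i, g₀ i < d i)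
    (h : ∀ g : ι → α, (∀ i, g i < d i) → ∀ᶠ i in l, g i < u i) :
    ∀ᶠ i in l, d i ≤ u i := by
  let g i := if u i < d i then u i else g₀ i
  have hg : ∀ i, g i < d i := fun i => by
    by_cases hi : u i < d i <;> simp only [g, hi, if_true, if_false, hg₀]
  filter_upwards [h g hg] with i hi
  by_contra! hlt
  simp only [g, hlt, if_true, lt_self_iff_false] at hi

theorem eventually_le_of_eventually_lt_imp_exists {d u g₀ : ι → α}
    (hg₀ : ∀ᶠ i in l, g₀ i < u i)
    (h : ∀ g : ι → α, (∀ᶠ i in l, g i < u i) →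
      ∃ g' : ι → α, (∀ i, g' i < d i) ∧ ∀ᶠ i in l, g i < g' i) :
    ∀ᶠ i in l, u i ≤ d i := by
  let g i := if d i < u i then d i else g₀ i
  have hg : ∀ᶠ i in l, g i < u i := by
    filter_upwards [hg₀] with i hi
    by_cases hdu : d i < u i <;> simp only [g, hdu, if_true, if_false, hi]
  obtain ⟨g', hg'd, hgg'⟩ := h g hg
  filter_upwards [hgg'] with i hi
  by_contra! hlt
  simp only [g, hlt, if_true] at hi
  exact (hi.trans (hg'd i)).false

end Patching

theorem evDom.trans {f g h : ℕ → Ordinal} (hfg : evDom f g) (hgh : evDom g h) : evDom f h := by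
  filter_upwards [hfg, hgh] with n h₁ h₂ using h₁.trans h₂

theorem eub_agrees_with_char_general
    (δ : Ordinal) (f : Ordinal → ℕ → Ordinal) (δn : ℕ → Ordinal)
    (hδcof : Cardinal.aleph0 < δ.cof)
    (hinter₁ : ∀ α < δ, ∃ g : ℕ → Ordinal, (∀ n, g n < δn n) ∧ evDom (f α) g)
    (hinter₂ : ∀ g : ℕ → Ordinal, (∀ n, g n < δn n) → ∃ α < δ, evDom g (f α))
    (heub₁ : ∀ α < δ, evDom (f α) (f δ))
    (heub₂ : ∀ g : ℕ → Ordinal, evDom g (f δ) → ∃ α < δ, evDom g (f α)) :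
    ∀ᶠ n in Filter.atTop, f δ n = δn n := by
  have hδ : 0 < δ := by
    refine pos_iff_ne_zero.2 fun h => ?_
    simp [h] at hδcof
  obtain ⟨g₀, hg₀, -⟩ := hinter₁ 0 hδ
  have lower : ∀ᶠ n in Filter.atTop, δn n ≤ f δ n :=
    eventually_le_of_forall_lt_imp_eventually_lt hg₀ fun g hg => by
      obtain ⟨α, hα, hgα⟩ := hinter₂ g hg
      exact hgα.trans (heub₁ α hα)
  have upper : ∀ᶠ n in Filter.atTop, f δ n ≤ δn n :=
    eventually_le_of_eventually_lt_imp_exists (heub₁ 0 hδ) fun g hg => by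
      obtain ⟨α, hα, hgα⟩ := heub₂ g hg
      obtain ⟨g', hg', hαg'⟩ := hinter₁ α hα
      exact ⟨g', hg', hgα.trans hαg'⟩
  filter_upwards [lower, upper] with n hl hu using le_antisymm hu hl

/-- if f_δ is an exact upper bound of the sequence below δ and the sequence
is cofinally interleaved with ∏ₙ δₙ, then f_δ(n) = δₙ for all but finitely many n. -/
theorem eub_agrees_with_char
    (τ : ℕ → Ordinal) (η δ : Ordinal) (f : Ordinal → ℕ → Ordinal) (δn : ℕ → Ordinal)
    (hδη : δ < η) (hδcof : Cardinal.aleph0 < δ.cof)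
    (hinc : ∀ α β, α < β → β < η → evDom (f α) (f β))
    (hδn : ∀ n, δn n ≤ τ n)
    (hinter₁ : ∀ α < δ, ∃ g : ℕ → Ordinal, (∀ n, g n < δn n) ∧ evDom (f α) g)
    (hinter₂ : ∀ g : ℕ → Ordinal, (∀ n, g n < δn n) → ∃ α < δ, evDom g (f α))
    (heub₁ : ∀ α < δ, evDom (f α) (f δ))
    (heub₂ : ∀ g : ℕ → Ordinal, evDom g (f δ) → ∃ α < δ, evDom g (f α)) :
    ∀ᶠ n in Filter.atTop, f δ n = δn n :=
  eub_agrees_with_char_general δ f δn hδcof hinter₁ hinter₂ heub₁ heub₂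
end

section
/- If two functions f, g : ω → Ord are both exact upper bounds (with respect to eventual domination <*) of the same <*-increasing sequence ⟨f_α : α < δ⟩, where δ has uncountable cofinality, then f(n) = g(n) for all but finitely many n. -/
theorem Filter.eventually_le_of_exact_upper_bound {ι α β : Type*} [LinearOrder β]
    {l : Filter α} {F : ι → α → β} {s : Set ι} {f g : α → β} (hs : s.Nonempty)
    (hf : ∀ i ∈ s, ∀ᶠ x in l, F i x < f x) (hg : ∀ i ∈ s, ∀ᶠ x in l, F i x < g x)
    (hg_exact : ∀ k : α → β, (∀ᶠ x in l, k x < g x) → ∃ i ∈ s, ∀ᶠ x in l, k x < F i x) :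
    ∀ᶠ x in l, g x ≤ f x := by
  classical
  obtain ⟨i₀, hi₀⟩ := hs
  by_contra hfreq
  simp only [Filter.not_eventually, not_le] at hfreq
  let k : α → β := fun x => if f x < g x then f x else F i₀ x
  have hkg : ∀ᶠ x in l, k x < g x := (hg i₀ hi₀).mono fun x hx => by
    simp only [k]
    split_ifs with hlt
    exacts [hlt, hx]
  obtain ⟨i, hi, hkF⟩ := hg_exact k hkg
  obtain ⟨x, ⟨hkx, hFx⟩, hlt⟩ := ((hkF.and (hf i hi)).and_frequently hfreq).exists
  have hkf : k x = f x := if_pos hlt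
  exact (hkx.trans hFx).ne hkf

theorem eub_unique_general (δ : Ordinal) (fseq : Ordinal → ℕ → Ordinal) (f g : ℕ → Ordinal)
    (hδ : Cardinal.aleph0 < δ.cof)
    (hf₁ : ∀ α < δ, evDom (fseq α) f)
    (hf₂ : ∀ k : ℕ → Ordinal, evDom k f → ∃ α < δ, evDom k (fseq α))
    (hg₁ : ∀ α < δ, evDom (fseq α) g)
    (hg₂ : ∀ k : ℕ → Ordinal, evDom k g → ∃ α < δ, evDom k (fseq α)) :
    ∀ᶠ n in Filter.atTop, f n = g n := by
  have hδ₀ : (Set.Iio δ).Nonempty :=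
    ⟨0, show 0 < δ from pos_iff_ne_zero.2 (by rintro rfl; simp at hδ)⟩
  filter_upwards [Filter.eventually_le_of_exact_upper_bound hδ₀ hf₁ hg₁ hg₂,
    Filter.eventually_le_of_exact_upper_bound hδ₀ hg₁ hf₁ hf₂] with n hgf hfg
  exact le_antisymm hfg hgf

/-- two exact upper bounds of the same <*-increasing sequence of length of
uncountable cofinality agree on a cofinite set. -/
theorem eub_unique (δ : Ordinal) (fseq : Ordinal → ℕ → Ordinal) (f g : ℕ → Ordinal)
    (hδ : Cardinal.aleph0 < δ.cof)
    (hpos : ∀ α < δ, ∀ n, 0 < fseq α n)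
    (hinc : ∀ α β, α < β → β < δ → evDom (fseq α) (fseq β))
    (hf₁ : ∀ α < δ, evDom (fseq α) f)
    (hf₂ : ∀ k : ℕ → Ordinal, evDom k f → ∃ α < δ, evDom k (fseq α))
    (hg₁ : ∀ α < δ, evDom (fseq α) g)
    (hg₂ : ∀ k : ℕ → Ordinal, evDom k g → ∃ α < δ, evDom k (fseq α)) :
    ∀ᶠ n in Filter.atTop, f n = g n :=
  eub_unique_general δ fseq f g hδ hf₁ hf₂ hg₁ hg₂
end

section
/- Suppose ⟨f_α : α < η⟩ is <*-increasing in ∏_n τ_n, β < η is a limit with uncountable cofinality, and f_β is an exact upper bound of ⟨f_α : α < β⟩ (i.e., the sequence is continuous at β). If N is internally approachable with β = sup(N ∩ η) and the whole sequence ⟨f_α : α < η⟩ ∈ N, and ⟨f_α : α < β⟩ is cofinally interleaved with ∏_n χ_N(τ_n), then f_β(n) = χ_N(τ_n) for all but finitely many n. -/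
open Filter

section EventualDomination

variable {ι α : Type*} [LinearOrder α] [OrderBot α] {l : Filter ι}

theorem eventually_le_of_forall_eventually_lt_imp {F G : ι → α} (hF : ∀ᶠ n in l, ⊥ < F n)
    (h : ∀ g : ι → α, (∀ᶠ n in l, g n < F n) → ∀ᶠ n in l, g n < G n) :
    ∀ᶠ n in l, F n ≤ G n := by
  by_contra hcon
  simp only [not_eventually, not_le] at hcon
  set g : ι → α := fun n => if G n < F n then G n else ⊥
  have hgF : ∀ᶠ n in l, g n < F n := by
    filter_upwards [hF] with n hn
    by_cases hGF : G n < F n <;> simp [g, hGF, hn]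
  obtain ⟨n, hGF, hgG⟩ := (hcon.and_eventually (h g hgF)).exists
  simp [g, hGF] at hgG

theorem exists_forall_lt_and_eventuallyEq {g χ : ι → α} (hχ : ∀ n, ⊥ < χ n)
    (hg : ∀ᶠ n in l, g n < χ n) : ∃ g' : ι → α, (∀ n, g' n < χ n) ∧ g' =ᶠ[l] g := by
  refine ⟨fun n => if g n < χ n then g n else ⊥, fun n => ?_, ?_⟩
  · by_cases hgχ : g n < χ n <;> simp [hgχ, hχ n]
  · filter_upwards [hg] with n hn
    simp [hn]

end EventualDomination

theorem ia_char_eq_continuity_point_general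
    (τ : ℕ → Ordinal) (β : Ordinal) (f : Ordinal → ℕ → Ordinal) (N : Set Ordinal)
    (hβlim : Order.IsSuccLimit β)
    (hub : ∀ α < β, evDom (f α) (f β))
    (heub : ∀ g : ℕ → Ordinal, evDom g (f β) → ∃ α < β, evDom g (f α))
    (hinter₁ : ∀ α < β, ∃ g : ℕ → Ordinal,
      (∀ n, g n < sSup (N ∩ Set.Iio (τ n))) ∧ evDom (f α) g)
    (hinter₂ : ∀ g : ℕ → Ordinal,
      (∀ n, g n < sSup (N ∩ Set.Iio (τ n))) → ∃ α < β, evDom g (f α)) :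
    ∀ᶠ n in Filter.atTop, f β n = sSup (N ∩ Set.Iio (τ n)) := by
  set χ : ℕ → Ordinal := fun n => sSup (N ∩ Set.Iio (τ n))
  have hβpos : 0 < β := hβlim.pos
  obtain ⟨g₀, hg₀χ, -⟩ := hinter₁ 0 hβpos
  have hle : ∀ᶠ n in atTop, f β n ≤ χ n := by
    refine eventually_le_of_forall_eventually_lt_imp
      ((hub 0 hβpos).mono fun n hn => bot_le.trans_lt hn) fun g hg => ?_
    obtain ⟨α, hαβ, hgα⟩ := heub g hg
    obtain ⟨h, hhχ, hαh⟩ := hinter₁ α hαβ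
    filter_upwards [hgα, hαh] with n hgn hαn
    exact hgn.trans (hαn.trans (hhχ n))
  have hge : ∀ᶠ n in atTop, χ n ≤ f β n := by
    refine eventually_le_of_forall_eventually_lt_imp
      (Eventually.of_forall fun n => bot_le.trans_lt (hg₀χ n)) fun g hg => ?_
    obtain ⟨g', hg'χ, hg'g⟩ :=
      exists_forall_lt_and_eventuallyEq (fun n => bot_le.trans_lt (hg₀χ n)) hg
    obtain ⟨α, hαβ, hg'α⟩ := hinter₂ g' hg'χ
    filter_upwards [hg'g, hg'α, hub α hαβ] with n hgn hg'n hαn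
    exact hgn ▸ hg'n.trans hαn
  filter_upwards [hle, hge] with n hle hge
  exact hle.antisymm hge

/-- Lemma lem:IAcharFunc: if f_β is an exact upper bound of the sequence
below β (continuity at β, cf(β) > ω), β = sup(N ∩ η), and the sequence below β is
cofinally interleaved with ∏ₙ χ_N(τₙ), then f_β(n) = χ_N(τₙ) for almost all n. -/
theorem ia_char_eq_continuity_point
    (τ : ℕ → Ordinal) (η β : Ordinal) (f : Ordinal → ℕ → Ordinal) (N : Set Ordinal)
    (hβ : β < η) (hβlim : Order.IsSuccLimit β) (hβcof : Cardinal.aleph0 < β.cof)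
    (hinc : ∀ α γ, α < γ → γ < η → evDom (f α) (f γ))
    (hub : ∀ α < β, evDom (f α) (f β))
    (heub : ∀ g : ℕ → Ordinal, evDom g (f β) → ∃ α < β, evDom g (f α))
    (hβsup : β = sSup (N ∩ Set.Iio η))
    (hinter₁ : ∀ α < β, ∃ g : ℕ → Ordinal,
      (∀ n, g n < sSup (N ∩ Set.Iio (τ n))) ∧ evDom (f α) g)
    (hinter₂ : ∀ g : ℕ → Ordinal,
      (∀ n, g n < sSup (N ∩ Set.Iio (τ n))) → ∃ α < β, evDom g (f α)) :
    ∀ᶠ n in Filter.atTop, f β n = sSup (N ∩ Set.Iio (τ n)) :=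
  ia_char_eq_continuity_point_general τ β f N hβlim hub heub hinter₁ hinter₂
end
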